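/- For every n ≥ 0, Σ_{p ∈ Motz_n} wt(p) = n!, the sum being over all Motzkin paths of length n. -/

import Mathlib

/-- The three kinds of steps of a Motzkin path. -/
inductive Step : Type
  | U : Step
  | D : Step
  | H : Step
deriving DecidableEq
instance : Fintype Step :=
  ⟨{Step.U, Step.D, Step.H}, fun x => by cases x <;> simp⟩
/-- Number of indices `i` with `i < m` (i.e. in the prefix of length `m`,
with 0-based indexing) at which the word `p` has the letter `s`. -/
def countIn {n : ℕ} (p : Fin n → Step) (s : Step) (m : ℕ) : ℕ :=
  (Finset.univ.filter (fun i : Fin n => (i : ℕ) < m ∧ p i = s)).card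
/-- A word `p` of length `n` over `{U, D, H}` is a Motzkin path if every
prefix contains at least as many `U`'s as `D`'s and the whole word contains
equally many `U`'s and `D`'s. -/
def IsMotzkin {n : ℕ} (p : Fin n → Step) : Prop :=
  (∀ m ≤ n, countIn p Step.D m ≤ countIn p Step.U m) ∧
  countIn p Step.U n = countIn p Step.D n
/-- The height `h_i` of step `i`: the number of `j ≤ i` with `p_j = U` minus
the number of `j ≤ i` with `p_j = D`, increased by `1` when `p_i = D`. -/
def heightAt {n : ℕ} (p : Fin n → Step) (i : Fin n) : ℕ :=
  ((Finset.univ.filter (fun j : Fin n => j ≤ i ∧ p j = Step.U)).card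
    - (Finset.univ.filter (fun j : Fin n => j ≤ i ∧ p j = Step.D)).card)
    + (if p i = Step.D then 1 else 0)
/-- The weight of a Motzkin path: the product over all steps of `h_i` for
`U` and `D` steps and of `2h_i + 1` for `H` steps. -/
def wt {n : ℕ} (p : Fin n → Step) : ℕ :=
  ∏ i : Fin n, (if p i = Step.H then 2 * heightAt p i + 1 else heightAt p i)
instance {n : ℕ} : DecidablePred (IsMotzkin (n := n)) := fun p => by
  unfold IsMotzkin countIn; infer_instance

/-!
Weight the prefixes of Motzkin paths as well, and let `W n k` be the total weight of the
prefixes of length `n` that end at height `k`. Appending a last step gives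
`W (n+1) (k+1) = (k+1) W n k + (2k+3) W n (k+1) + (k+2) W n (k+2)`, and `n! * C(n, k)` satisfies
the same recurrence with the same initial values, so `W n k = n! * C(n, k)`.
Motzkin paths are the prefixes ending at height `0`.
-/

open Finset Fin

lemma Nat.succ_mul_choose_add_mul_choose_succ_add_mul_choose_succ_succ (n k : ℕ) :
    (k + 1) * n.choose k + (2 * k + 3) * n.choose (k + 1) + (k + 2) * n.choose (k + 2)
      = (n + 1) * (n + 1).choose (k + 1) := by
  have h₁ := Nat.add_one_mul_choose_eq n k
  have h₂ := Nat.add_one_mul_choose_eq n (k + 1)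
  calc (k + 1) * n.choose k + (2 * k + 3) * n.choose (k + 1) + (k + 2) * n.choose (k + 2)
      = (k + 1) * (n + 1).choose (k + 1) + (k + 2) * (n + 1).choose (k + 2) := by
        rw [Nat.choose_succ_succ' n k, Nat.choose_succ_succ' n (k + 1)]; ring
    _ = (n + 1) * (n.choose k + n.choose (k + 1)) := by linarith
    _ = (n + 1) * (n + 1).choose (k + 1) := by rw [Nat.choose_succ_succ']

lemma Fintype.sum_snoc {α M : Type*} [Fintype α] [AddCommMonoid M] {n : ℕ}
    (f : (Fin (n + 1) → α) → M) :
    ∑ p, f p = ∑ s, ∑ q : Fin n → α, f (snoc q s) := by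
  rw [← Fintype.sum_prod_type']
  exact (Fintype.sum_equiv (snocEquiv fun _ => α) _ _ fun _ => rfl).symm

lemma Step.sum_univ {M : Type*} [AddCommMonoid M] (f : Step → M) :
    ∑ s, f s = f .U + f .D + f .H := by
  rw [show (univ : Finset Step) = {.U, .D, .H} from rfl,
    sum_insert (by decide), sum_insert (by decide), sum_singleton, add_assoc]

section Counting

variable {n : ℕ}

lemma heightAt_eq_countIn (p : Fin n → Step) (i : Fin n) :
    heightAt p i = (countIn p .U (i + 1) - countIn p .D (i + 1))
      + if p i = .D then 1 else 0 := by
  simp only [heightAt, countIn, Nat.lt_succ_iff, Fin.le_def]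

lemma countIn_snoc_of_le (q : Fin n → Step) (s x : Step) {m : ℕ} (hm : m ≤ n) :
    countIn (snoc q s) x m = countIn q x m := by
  simp only [countIn, card_filter, sum_univ_castSucc, val_castSucc, snoc_castSucc, val_last,
    snoc_last]
  rw [if_neg (by omega), add_zero]

lemma countIn_snoc_last (q : Fin n → Step) (s x : Step) :
    countIn (snoc q s) x (n + 1) = countIn q x n + if s = x then 1 else 0 := by
  rw [← countIn_snoc_of_le q s x le_rfl]
  simp only [countIn, card_filter, sum_univ_castSucc, val_castSucc, val_last, snoc_last,
    Nat.lt_succ_self, true_and, lt_irrefl, false_and, if_false, add_zero]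
  congr 1
  exact sum_congr rfl fun i _ => by simp [i.isLt, Nat.lt_succ_of_lt i.isLt]

lemma heightAt_snoc_castSucc (q : Fin n → Step) (s : Step) (i : Fin n) :
    heightAt (snoc q s) i.castSucc = heightAt q i := by
  rw [heightAt_eq_countIn, heightAt_eq_countIn, snoc_castSucc, val_castSucc,
    countIn_snoc_of_le q s _ i.isLt, countIn_snoc_of_le q s _ i.isLt]

end Counting

/-- The weight of a step `s` that ends at height `k`. -/
def stepWeight : Step → ℕ → ℕ
  | .U, k => k
  | .D, k => k + 1
  | .H, k => 2 * k + 1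

lemma wt_snoc {n k : ℕ} (q : Fin n → Step) (s : Step)
    (hk : countIn (snoc q s) .U (n + 1) = countIn (snoc q s) .D (n + 1) + k) :
    wt (snoc q s) = wt q * stepWeight s k := by
  rw [wt, prod_univ_castSucc]
  simp only [snoc_castSucc, heightAt_snoc_castSucc]
  rw [heightAt_eq_countIn, val_last, snoc_last, hk]
  cases s <;> simp [stepWeight, wt]

def IsMotzkinPrefix {n : ℕ} (k : ℕ) (q : Fin n → Step) : Prop :=
  (∀ m ≤ n, countIn q .D m ≤ countIn q .U m) ∧ countIn q .U n = countIn q .D n + k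

instance {n k : ℕ} : DecidablePred (IsMotzkinPrefix (n := n) k) := fun q => by
  unfold IsMotzkinPrefix countIn; infer_instance

section Prefix

variable {n : ℕ}

lemma isMotzkin_iff_isMotzkinPrefix_zero (p : Fin n → Step) :
    IsMotzkin p ↔ IsMotzkinPrefix 0 p :=
  Iff.rfl

lemma isMotzkinPrefix_zero_iff (q : Fin 0 → Step) (k : ℕ) : IsMotzkinPrefix k q ↔ k = 0 := by
  simp [IsMotzkinPrefix, countIn, eq_comm]

lemma isMotzkinPrefix_snoc_iff (q : Fin n → Step) (s : Step) (k : ℕ) :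
    IsMotzkinPrefix k (snoc q s) ↔
      (∀ m ≤ n, countIn q .D m ≤ countIn q .U m) ∧
      countIn q .U n + (if s = .U then 1 else 0)
        = countIn q .D n + (if s = .D then 1 else 0) + k := by
  simp only [IsMotzkinPrefix, countIn_snoc_last]
  refine and_congr_left fun hlast => ⟨fun h m hm => ?_, fun h m hm => ?_⟩
  · simpa only [countIn_snoc_of_le q s _ hm] using h m (hm.trans n.le_succ)
  · rcases Nat.lt_or_ge n m with hnm | hmn
    · rw [show m = n + 1 by omega, countIn_snoc_last, countIn_snoc_last]
      omega
    · simpa only [countIn_snoc_of_le q s _ hmn] using h m hmn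

lemma isMotzkinPrefix_snoc_U_iff (q : Fin n → Step) (k : ℕ) :
    IsMotzkinPrefix (k + 1) (snoc q .U) ↔ IsMotzkinPrefix k q := by
  rw [isMotzkinPrefix_snoc_iff, IsMotzkinPrefix]
  exact and_congr_right fun _ => by simp only [reduceCtorEq, ↓reduceIte]; omega

lemma isMotzkinPrefix_snoc_D_iff (q : Fin n → Step) (k : ℕ) :
    IsMotzkinPrefix k (snoc q .D) ↔ IsMotzkinPrefix (k + 1) q := by
  rw [isMotzkinPrefix_snoc_iff, IsMotzkinPrefix]
  exact and_congr_right fun _ => by simp only [reduceCtorEq, ↓reduceIte]; omega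

lemma isMotzkinPrefix_snoc_H_iff (q : Fin n → Step) (k : ℕ) :
    IsMotzkinPrefix k (snoc q .H) ↔ IsMotzkinPrefix k q := by
  rw [isMotzkinPrefix_snoc_iff, IsMotzkinPrefix]
  exact and_congr_right fun _ => by simp only [reduceCtorEq, ↓reduceIte]; omega

end Prefix

def prefixWeight (n k : ℕ) : ℕ :=
  ∑ q ∈ (univ : Finset (Fin n → Step)).filter (IsMotzkinPrefix k), wt q

lemma prefixWeight_zero (k : ℕ) : prefixWeight 0 k = if k = 0 then 1 else 0 := by
  rw [prefixWeight]
  split_ifs with hk <;> simp [isMotzkinPrefix_zero_iff, hk, wt]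

lemma prefixWeight_succ (n k : ℕ) :
    prefixWeight (n + 1) k = ∑ s, ∑ q ∈ univ.filter
      (fun q : Fin n → Step => IsMotzkinPrefix k (snoc q s)), wt (snoc q s) := by
  rw [prefixWeight, sum_filter, Fintype.sum_snoc]
  simp only [sum_filter]

lemma sum_wt_snoc (n k : ℕ) (s : Step) :
    ∑ q ∈ univ.filter (fun q : Fin n → Step => IsMotzkinPrefix k (snoc q s)), wt (snoc q s)
      = (∑ q ∈ univ.filter (fun q : Fin n → Step => IsMotzkinPrefix k (snoc q s)), wt q)
        * stepWeight s k := by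
  rw [sum_mul]
  exact sum_congr rfl fun q hq => wt_snoc q s (mem_filter.1 hq).2.2

lemma sum_wt_snoc_eq {n j k : ℕ} (s : Step)
    (h : ∀ q : Fin n → Step, IsMotzkinPrefix k (snoc q s) ↔ IsMotzkinPrefix j q) :
    ∑ q ∈ univ.filter (fun q : Fin n → Step => IsMotzkinPrefix k (snoc q s)), wt (snoc q s)
      = prefixWeight n j * stepWeight s k := by
  rw [sum_wt_snoc, filter_congr fun q _ => h q, prefixWeight]

lemma prefixWeight_succ_zero (n : ℕ) :
    prefixWeight (n + 1) 0 = prefixWeight n 0 + prefixWeight n 1 := by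
  rw [prefixWeight_succ, Step.sum_univ, sum_wt_snoc n 0 .U,
    sum_wt_snoc_eq .D (isMotzkinPrefix_snoc_D_iff · 0),
    sum_wt_snoc_eq .H (isMotzkinPrefix_snoc_H_iff · 0)]
  simp only [stepWeight]
  ring

lemma prefixWeight_succ_succ (n k : ℕ) :
    prefixWeight (n + 1) (k + 1) = (k + 1) * prefixWeight n k
      + (2 * k + 3) * prefixWeight n (k + 1) + (k + 2) * prefixWeight n (k + 2) := by
  rw [prefixWeight_succ, Step.sum_univ,
    sum_wt_snoc_eq .U (isMotzkinPrefix_snoc_U_iff · k),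
    sum_wt_snoc_eq .D (isMotzkinPrefix_snoc_D_iff · (k + 1)),
    sum_wt_snoc_eq .H (isMotzkinPrefix_snoc_H_iff · (k + 1))]
  simp only [stepWeight]
  ring

theorem prefixWeight_eq_factorial_mul_choose (n k : ℕ) :
    prefixWeight n k = n.factorial * n.choose k := by
  induction n generalizing k with
  | zero => cases k <;> simp [prefixWeight_zero]
  | succ n ih =>
    cases k with
    | zero => simp [prefixWeight_succ_zero, ih, Nat.factorial_succ]; ring
    | succ k =>
      rw [prefixWeight_succ_succ, ih, ih, ih, Nat.factorial_succ]
      linear_combination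
        n.factorial * Nat.succ_mul_choose_add_mul_choose_succ_add_mul_choose_succ_succ n k

/-- For every `n ≥ 0`, the sum of the weights of all Motzkin paths of
length `n` equals `n!`. -/
theorem sum_wt_motzkin_eq_factorial (n : ℕ) :
    ∑ p ∈ Finset.univ.filter (fun p : Fin n → Step => IsMotzkin p), wt p
      = Nat.factorial n := by
  have h : ∑ p ∈ univ.filter (fun p : Fin n → Step => IsMotzkin p), wt p = prefixWeight n 0 :=
    sum_congr (filter_congr fun p _ => isMotzkin_iff_isMotzkinPrefix_zero p) fun _ _ => rfl
  rw [h, prefixWeight_eq_factorial_mul_choose, Nat.choose_zero_right, mul_one]
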